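/- arXiv:1205.0643 — 7 statements merged into one kernel-verified Lean document; each statement's English description precedes it below -/
import Mathlib

section
/- The alternating group A_5 of degree 5 has exactly 22 distinct element-centralizers, i.e., |C(A_5)| = 22. -/
/-- For a group `G`, the set of element-centralizers `{C_G(x) : x ∈ G}`. -/
def centralizersSet (G : Type*) [Group G] : Set (Subgroup G) :=
  {H : Subgroup G | ∃ x : G, H = Subgroup.centralizer {x}}

section aux

lemma ncard_range_congr {α β γ : Type*} (r : α → β) (f : α → γ)
    (h : ∀ a b, r a = r b ↔ f a = f b) :
    (Set.range r).ncard = (Set.range f).ncard := by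
  rw [← Nat.card_coe_set_eq, ← Nat.card_coe_set_eq]
  refine Nat.card_congr (Equiv.ofBijective
    (fun H => ⟨f H.2.choose, Set.mem_range_self _⟩) ⟨?_, ?_⟩)
  · rintro ⟨H1, h1⟩ ⟨H2, h2⟩ hf
    have : r h1.choose = r h2.choose := (h _ _).mpr (congrArg Subtype.val hf)
    exact Subtype.ext (h1.choose_spec.symm.trans (this.trans h2.choose_spec))
  · rintro ⟨s, hs⟩
    refine ⟨⟨r hs.choose, Set.mem_range_self _⟩, Subtype.ext ?_⟩
    have h2 : ∃ x, r x = r hs.choose := ⟨hs.choose, rfl⟩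
    have : f h2.choose = f hs.choose := (h _ _).mp h2.choose_spec
    simpa [this] using hs.choose_spec

variable {G : Type*} [Group G] [Fintype G] [DecidableEq G]

/-- Finset version of centralizer of an element. -/
def centFinset (x : G) : Finset G := Finset.univ.filter (fun y => x * y = y * x)

lemma ncard_centralizersSet_eq :
    (centralizersSet G).ncard = (Finset.univ.image (centFinset (G := G))).card := by
  have hrange : centralizersSet G = Set.range (fun x : G => Subgroup.centralizer {x}) := by
    ext H; simp [centralizersSet, eq_comm, Set.mem_range]
  rw [hrange, ncard_range_congr _ (centFinset (G := G)) ?_]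
  · rw [← Set.ncard_coe_finset]
    congr 1
    simp [Finset.coe_image, Set.image_univ]
  · intro a b
    rw [Finset.ext_iff, SetLike.ext_iff]
    simp [centFinset, Subgroup.mem_centralizer_singleton_iff, eq_comm]

end aux

/-- The alternating group of degree 5 has exactly 22 element-centralizers. -/
theorem card_centralizers_alternatingGroup_five :
    (centralizersSet (alternatingGroup (Fin 5))).ncard = 22 := by
  rw [ncard_centralizersSet_eq]
  set_option maxRecDepth 10000 in decide
end

section
/- The symmetric group S_4 of degree 4 satisfies the condition (A, 10): every subset of S_4 with 11 elements contains two distinct elements that commute. -/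
namespace S4ConditionA

open Equiv

/-- Classification of elements of `S₄` into 10 classes, each of which consists of
pairwise commuting elements (the 10 maximal abelian subgroups of `S₄`). -/
def cls (g : Perm (Fin 4)) : Fin 10 :=
  if g ∈ [(1 : Perm (Fin 4)), c[0, 1], c[2, 3], c[0, 1] * c[2, 3]] then 0
  else if g ∈ [c[(0 : Fin 4), 2], c[1, 3], c[0, 2] * c[1, 3]] then 1
  else if g ∈ [c[(0 : Fin 4), 3], c[1, 2], c[0, 3] * c[1, 2]] then 2
  else if g ∈ [c[(0 : Fin 4), 1, 2, 3], c[0, 3, 2, 1]] then 3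
  else if g ∈ [c[(0 : Fin 4), 1, 3, 2], c[0, 2, 3, 1]] then 4
  else if g ∈ [c[(0 : Fin 4), 2, 1, 3], c[0, 3, 1, 2]] then 5
  else if g ∈ [c[(0 : Fin 4), 1, 2], c[0, 2, 1]] then 6
  else if g ∈ [c[(0 : Fin 4), 1, 3], c[0, 3, 1]] then 7
  else if g ∈ [c[(0 : Fin 4), 2, 3], c[0, 3, 2]] then 8
  else 9

lemma cls_commute : ∀ x y : Perm (Fin 4), cls x = cls y → x * y = y * x := by decide

end S4ConditionA

/-- The symmetric group `S₄` satisfies the condition `(𝒜, 10)`: every subset of `S₄`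
with 11 elements contains two distinct commuting elements. -/
theorem symmetricGroup_four_condition_A_ten :
    ∀ X : Finset (Equiv.Perm (Fin 4)), X.card = 11 →
      ∃ x ∈ X, ∃ y ∈ X, x ≠ y ∧ Commute x y := by
  intro X hX
  have hcard : (Finset.univ : Finset (Fin 10)).card < X.card := by
    simp [hX]
  obtain ⟨x, hx, y, hy, hne, hf⟩ :=
    Finset.exists_ne_map_eq_of_card_lt_of_maps_to hcard
      (fun a _ => Finset.mem_univ (S4ConditionA.cls a))
  exact ⟨x, hx, y, hy, hne, S4ConditionA.cls_commute x y hf⟩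
end

section
/- The symmetric group S_4 of degree 4 has exactly 14 distinct element-centralizers, i.e., |C(S_4)| = 14; in particular S_4 is not a C_11-group. -/
private def fcomm (x : Equiv.Perm (Fin 4)) : Finset (Equiv.Perm (Fin 4)) :=
  Finset.univ.filter fun g => g * x = x * g

private lemma key (x y : Equiv.Perm (Fin 4)) :
    Subgroup.centralizer {x} = Subgroup.centralizer {y} ↔ fcomm x = fcomm y := by
  constructor
  · intro h
    ext g
    simp only [fcomm, Finset.mem_filter, Finset.mem_univ, true_and]
    rw [← Subgroup.mem_centralizer_singleton_iff, ← Subgroup.mem_centralizer_singleton_iff, h]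
  · intro h
    ext g
    rw [Subgroup.mem_centralizer_singleton_iff, Subgroup.mem_centralizer_singleton_iff]
    have := Finset.ext_iff.mp h g
    simpa [fcomm] using this

private lemma card_image_congr {α β γ : Type*} [DecidableEq β] [DecidableEq γ] [Nonempty β]
    (s : Finset α) (g : α → β) (f : α → γ) (h : ∀ x y, g x = g y ↔ f x = f y) :
    (s.image g).card = (s.image f).card := by
  classical
  set k : γ → β := fun c => if hc : ∃ x, f x = c then g hc.choose else Classical.arbitrary β
    with hkdef
  have hk : ∀ x, k (f x) = g x := by
    intro x
    have hc : ∃ x', f x' = f x := ⟨x, rfl⟩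
    simp only [hkdef, dif_pos hc]
    exact (h _ _).mpr hc.choose_spec
  have himg : s.image g = (s.image f).image k := by
    rw [Finset.image_image]
    exact Finset.image_congr fun x _ => (hk x).symm
  rw [himg, Finset.card_image_of_injOn]
  intro c1 h1 c2 h2 hkk
  obtain ⟨x, _, rfl⟩ := Finset.mem_image.mp h1
  obtain ⟨y, _, rfl⟩ := Finset.mem_image.mp h2
  rw [hk, hk] at hkk
  exact (h x y).mp hkk

/-- The symmetric group `S₄` has exactly 14 element-centralizers; in particular
it is not a `C₁₁`-group. -/
theorem card_centralizers_symmetricGroup_four :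
    (centralizersSet (Equiv.Perm (Fin 4))).ncard = 14 ∧
      (centralizersSet (Equiv.Perm (Fin 4))).ncard ≠ 11 := by
  classical
  have h1 : centralizersSet (Equiv.Perm (Fin 4)) =
      ↑(Finset.univ.image fun x : Equiv.Perm (Fin 4) => Subgroup.centralizer {x}) := by
    ext H
    simp [centralizersSet, eq_comm]
  have h2 : (centralizersSet (Equiv.Perm (Fin 4))).ncard = 14 := by
    rw [h1, Set.ncard_coe_finset,
      card_image_congr _ _ fcomm fun x y => key x y]
    decide
  exact ⟨h2, by rw [h2]; decide⟩
end

section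
/- There exists a constant c > 0 such that for every positive integer n and every group G with exactly n distinct element-centralizers, the index of the center satisfies |G : Z(G)| ≤ c^{n−1}. -/
/-!
Induct on `|G : Z(G)|`. Pick a noncentral `x` whose centralizer `C = C_G(x)` has least index `t`.
Then `C` is maximal among proper centralizers, so every noncentral element of `A = C_G(C)`, the
centre of `C`, has centralizer exactly `C`. Let `r` be the number of centralizers not containing
`x`. For a fixed `g ∉ C`, `a ↦ C_G(g a)` separates the cosets of `Z(G)` in `A`, so
`|A : Z(G)| ≤ r`; and `G` is covered by `C` and those `r` centralizers, each of index at
least `t`, so `t ≤ r + 1` by Neumann's lemma. The centralizers containing `x` restrict to fewer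
centralizers of `C`, and `|G : Z(G)| = |A : Z(G)| · |C : Z(C)| · t`, so induction applied to `C`
gives the bound `4 ^ (n - 1)`.
-/

open Subgroup
open scoped Pointwise

namespace Subgroup

variable {G : Type*} [Group G]

theorem index_le_ncard_range {α : Type*} (H : Subgroup G) (f : G → α)
    (hf : ∀ a b, f a = f b → a⁻¹ * b ∈ H) (hfin : (Set.range f).Finite) :
    H.index ≤ (Set.range f).ncard := by
  have : Finite (Set.range f) := hfin
  rw [index, ← Nat.card_coe_set_eq]
  refine Nat.card_le_card_of_surjective (fun y => (y.2.choose : G ⧸ H)) fun q => ?_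
  induction q using QuotientGroup.induction_on with
  | H g =>
    let y : Set.range f := ⟨f g, g, rfl⟩
    exact ⟨y, QuotientGroup.eq.mpr (hf _ _ y.2.choose_spec)⟩

theorem mem_centralizer_singleton_self (x : G) : x ∈ centralizer {x} :=
  mem_centralizer_singleton_iff.mpr rfl

theorem mem_centralizer_singleton_comm {x y : G} :
    y ∈ centralizer {x} ↔ x ∈ centralizer {y} := by
  simp only [mem_centralizer_singleton_iff, eq_comm]

theorem subgroupOf_centralizer_singleton (H : Subgroup G) (y : H) :
    (centralizer {(y : G)}).subgroupOf H = centralizer {y} := by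
  ext c
  simp only [mem_subgroupOf, mem_centralizer_singleton_iff, Subtype.ext_iff, coe_mul]

theorem subgroupOf_centralizer_self (H : Subgroup G) :
    (centralizer (H : Set G)).subgroupOf H = center H := by
  ext c
  simp only [mem_subgroupOf, mem_centralizer_iff, mem_center_iff, Subtype.ext_iff, coe_mul,
    Subtype.forall, SetLike.mem_coe]

theorem index_center_eq_mul (H : Subgroup G) (hH : centralizer (H : Set G) ≤ H) :
    (center G).index =
      (center G).relIndex (centralizer (H : Set G)) * (center H).index * H.index := by
  have hZ : center G ≤ centralizer (H : Set G) := center_le_centralizer _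
  rw [← subgroupOf_centralizer_self, ← relIndex, relIndex_mul_relIndex _ _ _ hZ hH,
    relIndex_mul_index (hZ.trans hH)]

end Subgroup

section Centralizers

variable {G : Type*} [Group G]

theorem centralizer_singleton_eq_top_iff {x : G} : centralizer {x} = ⊤ ↔ x ∈ center G := by
  rw [centralizer_eq_top_iff_subset, Set.singleton_subset_iff, SetLike.mem_coe]

theorem top_mem_centralizersSet : ⊤ ∈ centralizersSet G :=
  ⟨1, (centralizer_singleton_eq_top_iff.mpr (one_mem _)).symm⟩

theorem centralizer_centralizer_singleton_le (x : G) :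
    centralizer (centralizer {x} : Set G) ≤ centralizer {x} :=
  centralizer_le (Set.singleton_subset_iff.mpr (mem_centralizer_singleton_self x))

theorem centralizersSet_finite_of_subgroup (H : Subgroup G) (hfin : (centralizersSet G).Finite) :
    (centralizersSet H).Finite := by
  refine (hfin.image fun E => E.subgroupOf H).subset ?_
  rintro _ ⟨y, rfl⟩
  exact ⟨centralizer {(y : G)}, ⟨y, rfl⟩, subgroupOf_centralizer_singleton H y⟩

/-- Both `⊤` and `C_G(x)` restrict to `⊤` on `C_G(x)`. -/
theorem ncard_centralizersSet_centralizer_add_lt {x : G} (hx : x ∉ center G)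
    (hfin : (centralizersSet G).Finite) :
    (centralizersSet (centralizer {x})).ncard + {E ∈ centralizersSet G | x ∉ E}.ncard <
      (centralizersSet G).ncard := by
  set C := centralizer {x}
  set I := {E ∈ centralizersSet G | x ∈ E}
  have hsplit : I.ncard + {E ∈ centralizersSet G | x ∉ E}.ncard = (centralizersSet G).ncard :=
    Set.ncard_inter_add_ncard_sdiff_eq_ncard _ {E | x ∈ E} hfin
  have htop : ⊤ ∈ I := ⟨top_mem_centralizersSet, mem_top x⟩
  have hrestrict : centralizersSet C ⊆ (fun E => E.subgroupOf C) '' (I \ {⊤}) := by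
    rintro _ ⟨y, rfl⟩
    by_cases hy : (y : G) ∈ center G
    · refine ⟨C, ⟨⟨⟨x, rfl⟩, mem_centralizer_singleton_self x⟩,
        mt centralizer_singleton_eq_top_iff.mp hx⟩, ?_⟩
      change C.subgroupOf C = _
      rw [← subgroupOf_centralizer_singleton, subgroupOf_self,
        centralizer_singleton_eq_top_iff.mpr hy, top_subgroupOf]
    · exact ⟨centralizer {(y : G)}, ⟨⟨⟨y, rfl⟩, mem_centralizer_singleton_comm.mp y.2⟩,
        mt centralizer_singleton_eq_top_iff.mp hy⟩, subgroupOf_centralizer_singleton C y⟩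
  have hI : I.Finite := hfin.subset fun _ hE => hE.1
  have := (Set.ncard_le_ncard hrestrict (hI.sdiff.image _)).trans (Set.ncard_image_le hI.sdiff)
  rw [Set.ncard_sdiff_singleton_of_mem htop] at this
  have := (Set.ncard_pos hI).mpr ⟨⊤, htop⟩
  omega

end Centralizers

section MinimalNoncentral

variable {G : Type*} [Group G]

def IsMinimalNoncentral (x : G) : Prop :=
  x ∉ center G ∧ ∀ y ∉ center G, (centralizer {x}).index ≤ (centralizer {y}).index

theorem exists_isMinimalNoncentral (h : center G ≠ ⊤) : ∃ x : G, IsMinimalNoncentral x := by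
  obtain ⟨y, hy⟩ : ∃ y : G, y ∉ center G := by
    by_contra! hall
    exact h (eq_top_iff' _ |>.mpr hall)
  let index : G → ℕ := fun y => (centralizer {y}).index
  exact ⟨Function.argminOn index {y | y ∉ center G} ⟨y, hy⟩,
    Function.argminOn_mem index {y | y ∉ center G} _,
    fun z hz => Function.argminOn_le index _ hz⟩

namespace IsMinimalNoncentral

variable {x : G}

theorem centralizer_eq_of_le [(center G).FiniteIndex] (hx : IsMinimalNoncentral x) {y : G}
    (hy : y ∉ center G) (hle : centralizer {x} ≤ centralizer {y}) :
    centralizer {y} = centralizer {x} := by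
  by_contra hne
  have : (centralizer {x}).FiniteIndex := finiteIndex_of_le (center_le_centralizer _)
  exact (index_strictAnti (lt_of_le_of_ne hle (Ne.symm hne))).not_ge (hx.2 y hy)

theorem centralizer_eq_of_mem_centralizer [(center G).FiniteIndex] (hx : IsMinimalNoncentral x)
    {a : G} (ha : a ∈ centralizer (centralizer {x} : Set G)) (haZ : a ∉ center G) :
    centralizer {a} = centralizer {x} :=
  hx.centralizer_eq_of_le haZ fun c hc => mem_centralizer_singleton_iff.mpr (ha c hc)

theorem inv_mul_mem_center [(center G).FiniteIndex] (hx : IsMinimalNoncentral x) {g a b : G}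
    (hg : g ∉ centralizer {x}) (ha : a ∈ centralizer (centralizer {x} : Set G))
    (hb : b ∈ centralizer (centralizer {x} : Set G))
    (hab : centralizer {g * a} = centralizer {g * b}) : a⁻¹ * b ∈ center G := by
  by_contra hw
  have hwC := hx.centralizer_eq_of_mem_centralizer (mul_mem (inv_mem ha) hb) hw
  have hcomm : Commute (g * a) (g * b) :=
    mem_centralizer_singleton_iff.mp (hab.le (mem_centralizer_singleton_self _))
  have hga : g * a ∈ centralizer {a⁻¹ * b} := by
    rw [mem_centralizer_singleton_iff, show a⁻¹ * b = (g * a)⁻¹ * (g * b) by group]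
    exact (Commute.refl _).inv_right.mul_right hcomm
  rw [hwC] at hga
  exact hg (by simpa using mul_mem hga (inv_mem (centralizer_centralizer_singleton_le x ha)))

theorem relIndex_center_le_ncard [(center G).FiniteIndex] (hx : IsMinimalNoncentral x)
    (hfin : (centralizersSet G).Finite) :
    (center G).relIndex (centralizer (centralizer {x} : Set G)) ≤
      {E ∈ centralizersSet G | x ∉ E}.ncard := by
  set A := centralizer (centralizer {x} : Set G)
  obtain ⟨g, hg⟩ : ∃ g : G, g ∉ centralizer {x} := by
    by_contra! hall
    exact mt centralizer_singleton_eq_top_iff.mp hx.1 (eq_top_iff' _ |>.mpr hall)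
  let f : A → Subgroup G := fun a => centralizer {g * a}
  have hrange : Set.range f ⊆ {E ∈ centralizersSet G | x ∉ E} := by
    rintro _ ⟨a, rfl⟩
    refine ⟨⟨g * a, rfl⟩, fun hxga => hg ?_⟩
    have hga := mem_centralizer_singleton_comm.mp hxga
    simpa using mul_mem hga (inv_mem (centralizer_centralizer_singleton_le x a.2))
  have hO : {E ∈ centralizersSet G | x ∉ E}.Finite := hfin.subset fun _ hE => hE.1
  refine (index_le_ncard_range _ f (fun a b hab => ?_) (hO.subset hrange)).trans
    (Set.ncard_le_ncard hrange hO)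
  exact mem_subgroupOf.mpr (by simpa using hx.inv_mul_mem_center hg a.2 b.2 hab)

/-- B. H. Neumann's lemma, applied to the cover of `G` by `C_G(x)` and the centralizers not
containing `x`, all of index at least that of `C_G(x)`. -/
theorem index_centralizer_le_ncard_add_one [(center G).FiniteIndex] (hx : IsMinimalNoncentral x)
    (hfin : (centralizersSet G).Finite) :
    (centralizer {x}).index ≤ {E ∈ centralizersSet G | x ∉ E}.ncard + 1 := by
  have hO : {E ∈ centralizersSet G | x ∉ E}.Finite := hfin.subset fun _ hE => hE.1
  classical
  set s := insert (centralizer {x}) hO.toFinset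
  have hcover : ⋃ E ∈ s, (1 : G) • (E : Set G) = Set.univ := by
    refine Set.eq_univ_of_forall fun g => ?_
    simp only [one_smul, Set.mem_iUnion, SetLike.mem_coe]
    by_cases hg : g ∈ centralizer {x}
    · exact ⟨_, Finset.mem_insert_self _ _, hg⟩
    · refine ⟨centralizer {g}, Finset.mem_insert_of_mem (hO.mem_toFinset.mpr ?_),
        mem_centralizer_singleton_self g⟩
      exact ⟨⟨g, rfl⟩, fun hxg => hg (mem_centralizer_singleton_comm.mp hxg)⟩
  obtain ⟨E, hE, -, hEs⟩ :=
    exists_index_le_card_of_leftCoset_cover (H := fun E => E) (g := fun _ => 1) hcover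
  have hxE : (centralizer {x}).index ≤ E.index := by
    rcases Finset.mem_insert.mp hE with rfl | hE
    · exact le_rfl
    obtain ⟨⟨w, rfl⟩, hxw⟩ := hO.mem_toFinset.mp hE
    exact hx.2 w fun hw => hxw (mem_centralizer_singleton_iff.mpr (mem_center_iff.mp hw x))
  calc (centralizer {x}).index ≤ s.card := hxE.trans hEs
    _ ≤ hO.toFinset.card + 1 := Finset.card_insert_le _ _
    _ = _ := by rw [Set.ncard_eq_toFinset_card _ hO]

end IsMinimalNoncentral

end MinimalNoncentral

theorem mul_mul_le_four_pow {q M t r k n : ℕ} (hq : q ≤ r) (ht : t ≤ r + 1)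
    (hM : M ≤ 4 ^ (k - 1)) (hk : 0 < k) (hn : k + r < n) : q * M * t ≤ 4 ^ (n - 1) := by
  have hqt : q * t ≤ 4 ^ (r + 1) :=
    calc q * t ≤ (r + 1) * (r + 1) := Nat.mul_le_mul (by omega) ht
      _ ≤ 2 ^ (r + 1) * 2 ^ (r + 1) :=
        Nat.mul_le_mul Nat.lt_two_pow_self.le Nat.lt_two_pow_self.le
      _ = 4 ^ (r + 1) := by rw [← mul_pow]; rfl
  calc q * M * t = q * t * M := by ring
    _ ≤ 4 ^ (r + 1) * 4 ^ (k - 1) := Nat.mul_le_mul hqt hM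
    _ = 4 ^ (k + r) := by rw [← pow_add]; congr 1; omega
    _ ≤ 4 ^ (n - 1) := Nat.pow_le_pow_right (by norm_num) (by omega)

theorem index_center_le_four_pow (G : Type*) [Group G] (hfin : (centralizersSet G).Finite) :
    (center G).index ≤ 4 ^ ((centralizersSet G).ncard - 1) := by
  induction hN : (center G).index using Nat.strong_induction_on generalizing G with
  | _ N ih =>
  rcases Nat.eq_zero_or_pos N with rfl | hNpos
  · exact Nat.zero_le _
  by_cases htop : center G = ⊤
  · rw [← hN, htop, index_top]
    exact Nat.one_le_pow _ _ (by norm_num)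
  have : (center G).FiniteIndex := ⟨hN ▸ hNpos.ne'⟩
  obtain ⟨x, hx⟩ := exists_isMinimalNoncentral htop
  set C := centralizer {x}
  have hdecomp := index_center_eq_mul C (centralizer_centralizer_singleton_le x)
  rw [hN] at hdecomp
  have hq : (center G).relIndex (centralizer (C : Set G)) ≠ 1 := fun h =>
    hx.1 (relIndex_eq_one.mp h fun c hc => mem_centralizer_singleton_iff.mp hc)
  have hCfin := centralizersSet_finite_of_subgroup C hfin
  have hlt : (center C).index < N := by
    rw [hdecomp] at hNpos ⊢
    obtain ⟨⟨hq0, hM0⟩, ht0⟩ := CanonicallyOrderedAdd.mul_pos.mp hNpos |>.imp_left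
      CanonicallyOrderedAdd.mul_pos.mp
    calc (center C).index < (center G).relIndex (centralizer (C : Set G)) * (center C).index :=
          lt_mul_left hM0 (by omega)
      _ ≤ _ := Nat.le_mul_of_pos_right _ ht0
  have hM := ih _ hlt C hCfin rfl
  rw [hdecomp]
  exact mul_mul_le_four_pow (hx.relIndex_center_le_ncard hfin)
    (hx.index_centralizer_le_ncard_add_one hfin) hM
    ((Set.ncard_pos hCfin).mpr ⟨⊤, top_mem_centralizersSet⟩)
    (ncard_centralizersSet_centralizer_add_lt hx.1 hfin)

/-- There is a constant `c > 0` such that any group with exactly `n` element-centralizers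
satisfies `|G : Z(G)| ≤ c ^ (n - 1)`. -/
theorem index_center_le_pow_card_centralizers :
    ∃ c : ℝ, 0 < c ∧ ∀ (n : ℕ), 0 < n → ∀ (G : Type) [Group G],
      (centralizersSet G).ncard = n →
        ((Subgroup.center G).index : ℝ) ≤ c ^ (n - 1) := by
  refine ⟨4, by norm_num, fun n hn G _ hG => ?_⟩
  have hfin : (centralizersSet G).Finite := Set.finite_of_ncard_pos (hG ▸ hn)
  exact_mod_cast hG ▸ index_center_le_four_pow G hfin
end

section
/- Let G be a finite group with exactly n distinct element-centralizers, and let I(G) = {a ∈ G : a² = 1} be the set of elements of G equal to their own inverse. Then 2n ≤ |G| + |I(G)|. -/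
/-- If a finite group `G` has exactly `n` element-centralizers, then
`2n ≤ |G| + |I(G)|`, where `I(G) = {a ∈ G | a² = 1}`. -/
theorem two_mul_card_centralizers_le (G : Type*) [Group G] [Finite G] (n : ℕ)
    (h : (centralizersSet G).ncard = n) :
    2 * n ≤ Nat.card G + {a : G | a ^ 2 = 1}.ncard := by
  classical
  have _inst := Fintype.ofFinite G
  subst h
  set f : G → Subgroup G := fun x => Subgroup.centralizer {x} with hf
  have hmem : ∀ x g : G, g ∈ Subgroup.centralizer ({x} : Set G) ↔ Commute x g := by
    intro x g
    simp [Subgroup.mem_centralizer_iff, Commute, SemiconjBy]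
  have hinv : ∀ x : G, f x⁻¹ = f x := by
    intro x
    ext g
    simp only [hf, hmem]
    exact Commute.inv_left_iff
  set I : Finset G := Finset.univ.filter (fun a => a ^ 2 = 1) with hIdef
  set img : Finset (Subgroup G) := Finset.univ.image f with himg
  have hn : (centralizersSet G).ncard = img.card := by
    have hr : centralizersSet G = Set.range f := by
      ext H; simp [centralizersSet, hf, eq_comm]
    rw [hr, Set.ncard_eq_toFinset_card', Set.toFinset_range]
  have hI : {a : G | a ^ 2 = 1}.ncard = I.card := by
    rw [Set.ncard_eq_toFinset_card']
    congr 1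
    ext a
    simp [hIdef]
  have hG : Nat.card G = (Finset.univ : Finset G).card := by
    simp [Nat.card_eq_fintype_card]
  rw [hn, hI, hG]
  have h1 : (Finset.univ : Finset G).card
      = ∑ H ∈ img, (Finset.univ.filter (fun x => f x = H)).card :=
    Finset.card_eq_sum_card_fiberwise
      (fun x _ => Finset.mem_image_of_mem f (Finset.mem_univ x))
  have h2 : I.card = ∑ H ∈ img, (I.filter (fun x => f x = H)).card :=
    Finset.card_eq_sum_card_fiberwise
      (fun x _ => Finset.mem_image_of_mem f (Finset.mem_univ x))
  rw [h1, h2, ← Finset.sum_add_distrib]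
  have h3 : 2 * img.card = ∑ _H ∈ img, 2 := by
    rw [Finset.sum_const, smul_eq_mul, mul_comm]
  rw [h3]
  apply Finset.sum_le_sum
  intro H hH
  obtain ⟨x, -, hx⟩ := Finset.mem_image.mp hH
  by_cases hx2 : x ^ 2 = 1
  · have a1 : x ∈ Finset.univ.filter (fun y => f y = H) := by simp [hx]
    have a2 : x ∈ I.filter (fun y => f y = H) := by simp [hIdef, hx, hx2]
    have c1 := Finset.card_pos.mpr ⟨x, a1⟩
    have c2 := Finset.card_pos.mpr ⟨x, a2⟩
    omega
  · have hne : x⁻¹ ≠ x := by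
      intro e
      apply hx2
      rw [pow_two]
      nth_rewrite 2 [← e]
      exact mul_inv_cancel x
    have b1 : x ∈ Finset.univ.filter (fun y => f y = H) := by simp [hx]
    have b2 : x⁻¹ ∈ Finset.univ.filter (fun y => f y = H) := by
      simp [hinv, hx]
    have : 1 < (Finset.univ.filter (fun y => f y = H)).card :=
      Finset.one_lt_card.mpr ⟨x, b1, x⁻¹, b2, hne.symm⟩
    omega
end

section
/- Let G be a semi-simple group (i.e., G has no nontrivial normal abelian subgroup) with exactly n distinct element-centralizers, n a positive integer. Then G is finite and |G| ≤ (n−1)!. -/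
open Pointwise

namespace Subgroup

variable {α G : Type*} [Group α] [Group G] [MulDistribMulAction α G]

theorem pointwise_smul_centralizer (a : α) (s : Set G) :
    a • centralizer s = centralizer (a • s) := by
  ext y
  rw [mem_pointwise_smul_iff_inv_smul_mem, mem_centralizer_iff, mem_centralizer_iff,
    ← Set.image_smul, Set.forall_mem_image]
  refine forall₂_congr fun x _ => ?_
  rw [← (MulAction.injective a).eq_iff, smul_mul', smul_mul', smul_inv_smul]

end Subgroup

section

variable {G : Type*} [Group G]

theorem commute_conj_self_of_forall_commute_conj {h : G}
    (hh : ∀ x : G, Commute x (h * x * h⁻¹)) (x : G) : Commute h (x * h * x⁻¹) := by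
  -- Both `x` and `x * h` commute with the commutator `x * h * x⁻¹ * h⁻¹`, hence so does `h`.
  have key : ∀ y : G, Commute y (y * h * y⁻¹ * h⁻¹) := fun y => by
    simpa [mul_assoc] using (Commute.refl y).mul_right (hh y).inv_right
  have hxh : Commute (x * h) (x * h * x⁻¹ * h⁻¹) := by
    simpa [mul_assoc] using key (x * h)
  have : Commute h (x * h * x⁻¹ * h⁻¹) := by
    simpa using (key x).inv_left.mul_left hxh
  simpa using this.mul_right (Commute.refl h)

theorem commute_conj_of_forall_commute_conj {h : G}
    (hh : ∀ x : G, Commute x (h * x * h⁻¹)) (g k : G) :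
    Commute (g * h * g⁻¹) (k * h * k⁻¹) := by
  simpa [mul_assoc] using
    (commute_conj_self_of_forall_commute_conj hh (g⁻¹ * k)).map (MulAut.conj g).toMonoidHom

theorem isMulCommutative_normalClosure_singleton {h : G}
    (hh : ∀ x : G, Commute x (h * x * h⁻¹)) :
    IsMulCommutative (Subgroup.normalClosure {h}) := by
  refine Subgroup.isMulCommutative_closure ?_
  simp only [Group.mem_conjugatesOfSet_iff, Set.mem_singleton_iff, exists_eq_left, isConj_iff]
  rintro _ ⟨g, rfl⟩ _ ⟨k, rfl⟩
  exact commute_conj_of_forall_commute_conj hh g k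

theorem eq_one_of_forall_commute_conj
    (hss : ∀ H : Subgroup G, H.Normal → (∀ a ∈ H, ∀ b ∈ H, a * b = b * a) → H = ⊥) {h : G}
    (hh : ∀ x : G, Commute x (h * x * h⁻¹)) : h = 1 := by
  have := isMulCommutative_normalClosure_singleton hh
  have hbot := hss (Subgroup.normalClosure {h}) inferInstance fun _ ha _ hb =>
    setLike_mul_comm ha hb
  simpa [hbot] using Subgroup.subset_normalClosure (Set.mem_singleton h)

theorem eq_one_of_forall_smul_centralizer_eq
    (hss : ∀ H : Subgroup G, H.Normal → (∀ a ∈ H, ∀ b ∈ H, a * b = b * a) → H = ⊥)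
    (g : ConjAct G)
    (hg : ∀ x : G, g • Subgroup.centralizer {x} = Subgroup.centralizer {x}) : g = 1 := by
  refine ConjAct.ofConjAct.injective (eq_one_of_forall_commute_conj hss fun x => ?_)
  have hx : g • x ∈ Subgroup.centralizer {x} := by
    rw [← hg, Subgroup.pointwise_smul_centralizer, Set.smul_set_singleton]
    exact Subgroup.mem_centralizer_singleton_iff.2 rfl
  rw [ConjAct.smul_def] at hx
  exact (Subgroup.mem_centralizer_singleton_iff.1 hx).symm

variable (G) in
def properCentralizers : SubMulAction (ConjAct G) (Subgroup G) where
  carrier := centralizersSet G \ {⊤}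
  smul_mem' g H := by
    rintro ⟨⟨x, rfl⟩, hne⟩
    refine ⟨⟨g • x, by rw [Subgroup.pointwise_smul_centralizer, Set.smul_set_singleton]⟩, ?_⟩
    rintro (htop : g • _ = ⊤)
    exact hne ((smul_eq_iff_eq_inv_smul g).1 htop |>.trans (Subgroup.normal_top.conjAct _))

theorem toPermHom_properCentralizers_injective
    (hss : ∀ H : Subgroup G, H.Normal → (∀ a ∈ H, ∀ b ∈ H, a * b = b * a) → H = ⊥) :
    Function.Injective (MulAction.toPermHom (ConjAct G) (properCentralizers G)) := by
  refine (injective_iff_map_eq_one _).2 fun g hg =>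
    eq_one_of_forall_smul_centralizer_eq hss g fun x => ?_
  by_cases htop : Subgroup.centralizer {x} = ⊤
  · rw [htop]
    exact Subgroup.normal_top.conjAct g
  · exact congrArg Subtype.val (Equiv.ext_iff.1 hg ⟨_, ⟨x, rfl⟩, htop⟩)

end

/-- A semi-simple group (no nontrivial normal abelian subgroup) with exactly `n`
element-centralizers is finite of order at most `(n-1)!`. -/
theorem semisimple_finite_of_centralizers (G : Type*) [Group G] (n : ℕ) (hn : 0 < n)
    (hss : ∀ H : Subgroup G, H.Normal → (∀ a ∈ H, ∀ b ∈ H, a * b = b * a) → H = ⊥)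
    (h : (centralizersSet G).ncard = n) :
    Finite G ∧ Nat.card G ≤ Nat.factorial (n - 1) := by
  have hfin : (centralizersSet G).Finite := Set.finite_of_ncard_pos (h ▸ hn)
  have : Finite (properCentralizers G) := hfin.sdiff.to_subtype
  have hcard : Nat.card (properCentralizers G) = n - 1 := by
    have htop : (⊤ : Subgroup G) ∈ centralizersSet G :=
      ⟨1, (Subgroup.centralizer_eq_top_iff_subset.2 (by simp)).symm⟩
    rw [← h, ← Set.ncard_sdiff_singleton_of_mem htop]
    rfl
  have hinj := (toPermHom_properCentralizers_injective hss).comp ConjAct.toConjAct.injective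
  have : Finite G := Finite.of_injective _ hinj
  refine ⟨this, ?_⟩
  calc Nat.card G ≤ Nat.card (Equiv.Perm (properCentralizers G)) :=
        Nat.card_le_card_of_injective _ hinj
    _ = Nat.factorial (n - 1) := by rw [Nat.card_perm, hcard]
end

section
/- Let G be a finite group with exactly n distinct element-centralizers. Then |I(G)| ≥ 2n − |G|, where I(G) = {a ∈ G : a² = 1}; if moreover 19|G| < 30n + 15, then 15·|I(G)| > 4·|G| − 15, i.e., |I(G)| > 4|G|/15 − 1. -/
/-- If a finite group `G` has exactly `n` element-centralizers, then
`|I(G)| ≥ 2n - |G|` where `I(G) = {a ∈ G | a² = 1}`; moreover if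
`19|G| < 30n + 15`, then `15|I(G)| > 4|G| - 15`. -/
theorem card_involutions_bounds (G : Type*) [Group G] [Finite G] (n : ℕ)
    (h : (centralizersSet G).ncard = n) :
    (({a : G | a ^ 2 = 1}.ncard : ℤ) ≥ 2 * n - Nat.card G) ∧
      (19 * Nat.card G < 30 * n + 15 →
        (15 * {a : G | a ^ 2 = 1}.ncard : ℤ) > 4 * Nat.card G - 15) := by
  classical
  have _inst := Fintype.ofFinite G
  set f : G → Subgroup G := fun x => Subgroup.centralizer {x} with hf
  have hfinv : ∀ x : G, f x⁻¹ = f x := by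
    intro x
    ext g
    simp only [hf, Subgroup.mem_centralizer_iff, Set.mem_singleton_iff,
      forall_eq]
    constructor
    · intro hg
      have := congrArg (fun t => x * t * x) hg
      simpa [mul_assoc] using this.symm
    · intro hg
      have := congrArg (fun t => x⁻¹ * t * x⁻¹) hg
      simpa [mul_assoc] using this.symm
  have hset : centralizersSet G = Set.range f := by
    ext H
    simp [centralizersSet, Set.mem_range, eq_comm, hf]
  have hn : n = (Finset.univ.image f).card := by
    rw [← h, hset, ← Set.ncard_coe_finset, Finset.coe_image, Finset.coe_univ,
      Set.image_univ]
  have hI : {a : G | a ^ 2 = 1}.ncard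
      = (Finset.univ.filter (fun a : G => a ^ 2 = 1)).card := by
    rw [← Set.ncard_coe_finset]
    congr 1
    ext a
    simp
  have hG : Nat.card G = Fintype.card G := Nat.card_eq_fintype_card
  have key : 2 * (Finset.univ.image f).card
      ≤ Fintype.card G + (Finset.univ.filter (fun a : G => a ^ 2 = 1)).card := by
    have h1 : Fintype.card G
        = ∑ H ∈ Finset.univ.image f,
            ((Finset.univ : Finset G).filter (fun x => f x = H)).card := by
      rw [← Finset.card_univ]
      exact Finset.card_eq_sum_card_fiberwise
        (fun x _ => Finset.mem_image_of_mem f (Finset.mem_univ x))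
    have h2 : (Finset.univ.filter (fun a : G => a ^ 2 = 1)).card
        = ∑ H ∈ Finset.univ.image f,
            ((Finset.univ.filter (fun a : G => a ^ 2 = 1)).filter
              (fun x => f x = H)).card := by
      exact Finset.card_eq_sum_card_fiberwise
        (fun x _ => Finset.mem_image_of_mem f (Finset.mem_univ x))
    have h3 : ∀ H ∈ Finset.univ.image f,
        2 ≤ ((Finset.univ : Finset G).filter (fun x => f x = H)).card
          + ((Finset.univ.filter (fun a : G => a ^ 2 = 1)).filter
              (fun x => f x = H)).card := by
      intro H hH
      obtain ⟨x, -, hx⟩ := Finset.mem_image.mp hH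
      by_cases hc : ∃ a : G, a ^ 2 = 1 ∧ f a = H
      · obtain ⟨a, ha1, ha2⟩ := hc
        have m1 : a ∈ (Finset.univ : Finset G).filter (fun x => f x = H) := by
          simp [ha2]
        have m2 : a ∈ (Finset.univ.filter (fun a : G => a ^ 2 = 1)).filter
            (fun x => f x = H) := by
          simp [ha1, ha2]
        have c1 := Finset.card_pos.mpr ⟨a, m1⟩
        have c2 := Finset.card_pos.mpr ⟨a, m2⟩
        omega
      · push_neg at hc
        have hx2 : x ^ 2 ≠ 1 := fun h' => hc x h' hx
        have hne : x ≠ x⁻¹ := by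
          intro h'
          apply hx2
          rw [pow_two]
          nth_rewrite 2 [h']
          exact mul_inv_cancel x
        have hsub : ({x, x⁻¹} : Finset G)
            ⊆ (Finset.univ : Finset G).filter (fun y => f y = H) := by
          intro y hy
          rcases Finset.mem_insert.mp hy with rfl | hy
          · simp [hx]
          · rw [Finset.mem_singleton.mp hy]
            simp [hfinv, hx]
        have hcard : ({x, x⁻¹} : Finset G).card = 2 := by
          rw [Finset.card_insert_of_notMem (by simpa using hne)]
          simp
        have := Finset.card_le_card hsub
        omega
    calc 2 * (Finset.univ.image f).card
        = ∑ _H ∈ Finset.univ.image f, 2 := by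
          rw [Finset.sum_const, smul_eq_mul, mul_comm]
      _ ≤ ∑ H ∈ Finset.univ.image f,
            (((Finset.univ : Finset G).filter (fun x => f x = H)).card
              + ((Finset.univ.filter (fun a : G => a ^ 2 = 1)).filter
                  (fun x => f x = H)).card) := Finset.sum_le_sum h3
      _ = _ := by rw [Finset.sum_add_distrib, ← h1, ← h2]
  rw [hI, hG, hn]
  constructor
  · omega
  · intro hlt
    omega
end
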